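/- Let k be a natural number and let D be an oriented graph with minimum pseudo-semidegree at least k/2. If P is a longest antidirected path in D and P has length m < k, then m is odd. -/

import Mathlib

/-- Out-degree of `v` in the digraph given by the edge relation `D`. -/
noncomputable def outDeg {V : Type*} (D : V → V → Prop) (v : V) : ℕ := {w | D v w}.ncard

/-- In-degree of `v` in the digraph given by the edge relation `D`. -/
noncomputable def inDeg {V : Type*} (D : V → V → Prop) (v : V) : ℕ := {w | D w v}.ncard

/-- `D` is an oriented graph: for each pair of vertices, at most one of the edges
`uv`, `vu` is present (in particular there are no loops). -/
def IsOriented {V : Type*} (D : V → V → Prop) : Prop := ∀ u v, D u v → ¬ D v u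

/-- The number of (directed) edges of the digraph `D`. -/
noncomputable def edgeCount {V : Type*} (D : V → V → Prop) : ℕ := {p : V × V | D p.1 p.2}.ncard

/-- The minimum pseudo-semidegree of `D` is at least `x`: `D` has an edge, and every
vertex has out-degree `0` or at least `x`, and in-degree `0` or at least `x`. -/
def PseudoGE {V : Type*} (D : V → V → Prop) (x : ℝ) : Prop :=
  (∃ u v, D u v) ∧
    ∀ v, (outDeg D v = 0 ∨ x ≤ (outDeg D v : ℝ)) ∧ (inDeg D v = 0 ∨ x ≤ (inDeg D v : ℝ))

/-- The minimum pseudo-semidegree of `D` is strictly greater than `x`. -/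
def PseudoGT {V : Type*} (D : V → V → Prop) (x : ℝ) : Prop :=
  (∃ u v, D u v) ∧
    ∀ v, (outDeg D v = 0 ∨ x < (outDeg D v : ℝ)) ∧ (inDeg D v = 0 ∨ x < (inDeg D v : ℝ))

/-- `f, g` describe an antidirected path `f 0, f 1, ..., f m` (of length `m`) in `D`:
`g i = true` iff the `i`-th edge is directed from `f i` towards `f (i+1)`, and consecutive
edges alternate in direction (equivalently, every vertex of the path has out-degree `0`
or in-degree `0` on the path). -/
def IsAntipath {V : Type*} (D : V → V → Prop) (m : ℕ) (f : ℕ → V) (g : ℕ → Bool) : Prop :=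
  Set.InjOn f (Set.Iic m) ∧
  (∀ i < m, if g i then D (f i) (f (i + 1)) else D (f (i + 1)) (f i)) ∧
  (∀ i, i + 1 < m → g i ≠ g (i + 1))

/-- `D` contains each of the (at most two) antidirected paths of length `k`:
for each initial direction `b` there is an antidirected path of length `k`
whose first edge has direction `b`. -/
def ContainsAllAntipaths {V : Type*} (D : V → V → Prop) (k : ℕ) : Prop :=
  ∀ b : Bool, ∃ f g, IsAntipath D k f g ∧ g 0 = b

/-- `f` describes an antidirected cycle of length `n` in `D`: the `i`-th edge joins
`f i` and `f (i+1)` and is directed from `f i` iff `g i = true`; every vertex `f i`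
has out-degree `0` on the cycle (i.e. `g i = false ∧ g (i-1) = true`) or in-degree `0`
on the cycle (i.e. `g i = true ∧ g (i-1) = false`). -/
def IsAnticycle {V : Type*} (D : V → V → Prop) (n : ℕ) [NeZero n] (f : ZMod n → V) : Prop :=
  3 ≤ n ∧ Function.Injective f ∧
  ∃ g : ZMod n → Bool,
    (∀ i, if g i then D (f i) (f (i + 1)) else D (f (i + 1)) (f i)) ∧
    (∀ i : ZMod n, (g i = false ∧ g (i - 1) = true) ∨ (g i = true ∧ g (i - 1) = false))

/-! Suppose `m` is even and let `P = x₀ … x_m` be a longest antipath; passing to the converse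
digraph if necessary, `x₀ → x₁`, and then also `x_m → x_{m-1}`. By maximality every
out-neighbour of either end lies on `P`, and each end has more than `m/2` of them.

If the two ends were joined by an edge `x₀ → x_m`, moving `x_m` to the front would give
another longest antipath, so all in- and out-neighbours of `x_m`, more than `m` of them, would
lie among the other `m` vertices of `P`. Now if `x_m → x_j` with `j` odd, then
`x₀ … x_j x_m x_{m-1} … x_{j+1}` is a longest antipath of the same shape, so `x₀ ↛ x_{j+1}`;
symmetrically `x₀ → x_j` forbids `x_m → x_{j-1}`. Pairing the indices accordingly shows that
`x₀` and `x_m` have at most `m` out-neighbours together, a contradiction. -/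

open Finset

def evenForward (i : ℕ) : Bool := decide (Even i)

lemma evenForward_eq_not {a b : ℕ} (h : Odd (a + b)) : evenForward a = !evenForward b := by
  have := Nat.even_add.not.mp (Nat.not_even_iff_odd.mpr h)
  by_cases ha : Even a <;> by_cases hb : Even b <;> simp_all [evenForward]

lemma evenForward_succ (i : ℕ) : evenForward (i + 1) = !evenForward i :=
  evenForward_eq_not (by simp)

def AntipathLengthLE {V : Type*} (D : V → V → Prop) (m : ℕ) : Prop :=
  ∀ m' f g, IsAntipath D m' f g → m' ≤ m

lemma lt_two_mul_of_half_lt {m n : ℕ} (h : (m : ℝ) / 2 < n) : m < 2 * n := by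
  exact_mod_cast (by linarith : (m : ℝ) < 2 * n)

section
variable {V : Type*} {D : V → V → Prop}

lemma IsOriented.irrefl (hor : IsOriented D) (v : V) : ¬ D v v := fun h => hor v v h h

lemma IsOriented.converse (hor : IsOriented D) : IsOriented (flip D) := fun u v h h' => hor v u h h'

lemma PseudoGE.pseudoGT {x y : ℝ} (h : PseudoGE D x) (hyx : y < x) : PseudoGT D y :=
  ⟨h.1, fun v => ⟨(h.2 v).1.imp_right hyx.trans_le, (h.2 v).2.imp_right hyx.trans_le⟩⟩

lemma PseudoGT.converse {x : ℝ} (h : PseudoGT D x) : PseudoGT (flip D) x :=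
  ⟨let ⟨u, v, huv⟩ := h.1; ⟨v, u, huv⟩, fun v => (h.2 v).symm⟩

lemma PseudoGT.lt_outDeg {x : ℝ} (h : PseudoGT D x) {v w : V} (hfin : {u | D v u}.Finite)
    (hvw : D v w) : x < outDeg D v :=
  (h.2 v).1.resolve_left ((Set.ncard_pos hfin).2 ⟨w, hvw⟩).ne'

lemma PseudoGT.lt_inDeg {x : ℝ} (h : PseudoGT D x) {v w : V} (hfin : {u | D u v}.Finite)
    (hwv : D w v) : x < inDeg D v :=
  (h.2 v).2.resolve_left ((Set.ncard_pos hfin).2 ⟨w, hwv⟩).ne'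

lemma outDeg_le_card_filter {u : V} {x : ℕ → V} {s : Finset ℕ}
    [DecidablePred fun t => D u (x t)]
    (h : {w | D u w} ⊆ x '' s) : outDeg D u ≤ #{t ∈ s | D u (x t)} := by
  have hsub : {w | D u w} ⊆ x '' ↑{t ∈ s | D u (x t)} := by
    intro w hw
    obtain ⟨t, hts, rfl⟩ := h hw
    exact ⟨t, by simpa using ⟨hts, hw⟩, rfl⟩
  calc outDeg D u ≤ (x '' ↑{t ∈ s | D u (x t)}).ncard :=
        Set.ncard_le_ncard hsub (Set.toFinite _)
    _ ≤ #{t ∈ s | D u (x t)} :=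
      (Set.ncard_image_le (Set.toFinite _)).trans_eq (Set.ncard_coe_finset _)

end

namespace IsAntipath
variable {V : Type*} {D : V → V → Prop} {m : ℕ} {f x : ℕ → V} {g : ℕ → Bool}

lemma zero (f : ℕ → V) (g : ℕ → Bool) : IsAntipath D 0 f g :=
  ⟨fun s hs t ht _ => by simp_all, fun i hi => absurd hi i.not_lt_zero,
    fun i hi => absurd hi (Nat.not_lt_zero _)⟩

lemma congr_dir (h : IsAntipath D m f g) {g' : ℕ → Bool} (hg : ∀ i < m, g i = g' i) :
    IsAntipath D m f g' := by
  obtain ⟨hinj, hedge, halt⟩ := h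
  refine ⟨hinj, fun i hi => hg i hi ▸ hedge i hi, fun i hi => ?_⟩
  rw [← hg i (by omega), ← hg (i + 1) hi]
  exact halt i hi

lemma mono (h : IsAntipath D m f g) {m' : ℕ} (hm : m' ≤ m) : IsAntipath D m' f g :=
  ⟨h.1.mono (Set.Iic_subset_Iic.mpr hm), fun i hi => h.2.1 i (by omega),
    fun i hi => h.2.2 i (by omega)⟩

lemma converse (h : IsAntipath D m f g) : IsAntipath (flip D) m f (fun i => !g i) := by
  obtain ⟨hinj, hedge, halt⟩ := h
  refine ⟨hinj, fun i hi => ?_, fun i hi => by simpa using halt i hi⟩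
  have := hedge i hi
  cases g i <;> simpa [flip] using this

lemma reverse (h : IsAntipath D m f g) :
    IsAntipath D m (fun t => f (m - t)) (fun t => !g (m - 1 - t)) := by
  obtain ⟨hinj, hedge, halt⟩ := h
  refine ⟨fun s hs t ht hst => ?_, fun i hi => ?_, fun i hi => ?_⟩
  · simp only [Set.mem_Iic] at hs ht
    have := hinj (Set.mem_Iic.mpr (Nat.sub_le m s)) (Set.mem_Iic.mpr (Nat.sub_le m t)) hst
    omega
  · have := hedge (m - 1 - i) (by omega)
    rw [show m - 1 - i + 1 = m - i by omega] at this
    simp only [show m - (i + 1) = m - 1 - i by omega]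
    revert this
    cases g (m - 1 - i) <;> simp
  · have := halt (m - 1 - (i + 1)) (by omega)
    rw [show m - 1 - (i + 1) + 1 = m - 1 - i by omega] at this
    simpa using this.symm

lemma cons (h : IsAntipath D m f g) {w : V} (hw : ∀ t ≤ m, f t ≠ w)
    (hedge : if g 0 then D (f 0) w else D w (f 0)) :
    IsAntipath D (m + 1) (fun | 0 => w | t + 1 => f t) (fun | 0 => !g 0 | t + 1 => g t) := by
  obtain ⟨hinj, hedges, halt⟩ := h
  refine ⟨fun s hs t ht hst => ?_, fun i hi => ?_, fun i hi => ?_⟩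
  · simp only [Set.mem_Iic] at hs ht
    match s, t with
    | 0, 0 => rfl
    | 0, t + 1 => exact absurd hst.symm (hw t (by omega))
    | s + 1, 0 => exact absurd hst (hw s (by omega))
    | s + 1, t + 1 =>
      exact congrArg (· + 1) (hinj (Set.mem_Iic.mpr (by omega)) (Set.mem_Iic.mpr (by omega)) hst)
  · match i with
    | 0 => cases h0 : g 0 <;> simp_all
    | i + 1 => exact hedges i (by omega)
  · match i with
    | 0 => simp
    | i + 1 => exact halt i (by omega)

lemma eq_evenForward (h : IsAntipath D m f g) (h0 : g 0 = true) : ∀ i < m, g i = evenForward i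
  | 0, _ => by simp [h0, evenForward]
  | i + 1, hi => by
    have hne := h.2.2 i hi
    rw [eq_evenForward h h0 i (by omega)] at hne
    rw [evenForward_succ]
    revert hne
    cases g (i + 1) <;> cases evenForward i <;> simp

lemma evenForward_of_dir (h : IsAntipath D m f g) (h0 : g 0 = true) :
    IsAntipath D m f evenForward :=
  h.congr_dir (h.eq_evenForward h0)

lemma reverse_evenForward (h : IsAntipath D m x evenForward) (hm : Even m) :
    IsAntipath D m (fun t => x (m - t)) evenForward :=
  h.reverse.congr_dir fun i hi => by
    rw [evenForward_eq_not (a := m - 1 - i) (b := i) (by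
      rw [show m - 1 - i + i = m - 1 by omega]; exact Nat.Even.sub_odd (by omega) hm odd_one)]
    simp

lemma rotate (h : IsAntipath D m x evenForward) (hm : Even m) {j : ℕ} (hj : Odd j) (hjm : j < m)
    (hD : D (x m) (x j)) :
    IsAntipath D m (fun t => x (if t ≤ j then t else m + j + 1 - t)) evenForward := by
  obtain ⟨hinj, hedge, -⟩ := h
  refine ⟨hinj.comp (fun s hs t ht hst => ?_) (fun t _ => ?_), fun i hi => ?_,
    fun i _ => by simp [evenForward_succ]⟩
  · simp only [Set.mem_Iic] at hs ht
    split_ifs at hst <;> omega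
  · simp only [Set.mem_Iic]
    split_ifs <;> omega
  rcases lt_trichotomy i j with hij | rfl | hij
  · simpa [hij.le, show i + 1 ≤ j by omega] using hedge i (by omega)
  · simpa [show evenForward i = false by simpa [evenForward] using hj] using hD
  · have := hedge (m + j - i) (by omega)
    rw [show m + j - i + 1 = m + j + 1 - i by omega,
      evenForward_eq_not (a := m + j - i) (b := i) (by
        rw [show m + j - i + i = m + j by omega]; exact hm.add_odd hj)] at this
    simp only [show ¬ i ≤ j by omega, show ¬ i + 1 ≤ j by omega, if_false,
      show m + j + 1 - (i + 1) = m + j - i by omega]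
    revert this
    cases evenForward i <;> simp

lemma exists_eq_of_adj_start (h : IsAntipath D m f g) (hlong : AntipathLengthLE D m) {w : V}
    (hw : if g 0 then D (f 0) w else D w (f 0)) : ∃ t ≤ m, f t = w := by
  by_contra! hnot
  have := hlong _ _ _ (h.cons hnot hw)
  omega

lemma not_adj_start_end (hor : IsOriented D) (hdeg : PseudoGT D ((m : ℝ) / 2))
    (hlong : AntipathLengthLE D m) (h : IsAntipath D m f g) (h0 : g 0 = true)
    (hlast : g (m - 1) = false) : ¬ D (f 0) (f m) := by
  intro hD
  obtain ⟨m, rfl⟩ : ∃ n, m = n + 1 := Nat.exists_eq_add_one.mpr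
    (Nat.pos_of_ne_zero (by rintro rfl; simp_all))
  rw [Nat.add_sub_cancel] at hlast
  have hout : ∀ w, D (f (m + 1)) w → ∃ t ∈ range (m + 1), f t = w := by
    intro w hw
    obtain ⟨t, ht, rfl⟩ := h.reverse.exists_eq_of_adj_start hlong (by simpa [hlast] using hw)
    have : t ≠ 0 := by rintro rfl; exact hor.irrefl _ hw
    exact ⟨m + 1 - t, mem_range.mpr (by omega), rfl⟩
  have hin : ∀ w, D w (f (m + 1)) → ∃ t ∈ range (m + 1), f t = w := by
    intro w hw
    have hfm : ∀ t ≤ m, f t ≠ f (m + 1) := fun t ht he => by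
      have := h.1 (Set.mem_Iic.mpr (by omega)) (Set.mem_Iic.mpr le_rfl) he
      omega
    -- `f (m + 1), f 0, …, f m` is again a longest antipath
    have hcons := (h.mono m.le_succ).cons hfm (by simpa [h0] using hD)
    obtain ⟨t, ht, hft⟩ := hcons.exists_eq_of_adj_start hlong (by simpa [h0] using hw)
    match t with
    | 0 => exact absurd (hft ▸ hw) (hor.irrefl _)
    | t + 1 => exact ⟨t, mem_range.mpr (by omega), hft⟩
  have hsub : {w | D (f (m + 1)) w} ∪ {w | D w (f (m + 1))} ⊆ f '' ↑(range (m + 1)) := by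
    rintro w (hw | hw)
    · obtain ⟨t, ht, rfl⟩ := hout w hw; exact ⟨t, ht, rfl⟩
    · obtain ⟨t, ht, rfl⟩ := hin w hw; exact ⟨t, ht, rfl⟩
  have hfin : (f '' ↑(range (m + 1))).Finite := Set.toFinite _
  have hsum : outDeg D (f (m + 1)) + inDeg D (f (m + 1)) ≤ m + 1 := calc
    _ = ({w | D (f (m + 1)) w} ∪ {w | D w (f (m + 1))}).ncard :=
      (Set.ncard_union_eq (Set.disjoint_left.mpr fun w h1 h2 => hor _ _ h1 h2)
        (hfin.subset (Set.subset_union_left.trans hsub))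
        (hfin.subset (Set.subset_union_right.trans hsub))).symm
    _ ≤ (f '' ↑(range (m + 1))).ncard := Set.ncard_le_ncard hsub hfin
    _ ≤ m + 1 := (Set.ncard_image_le (Set.toFinite _)).trans (by simp)
  have hlast_edge : D (f (m + 1)) (f m) := by simpa [hlast] using h.2.1 m (by omega)
  have hout_deg := lt_two_mul_of_half_lt (hdeg.lt_outDeg
    (hfin.subset (Set.subset_union_left.trans hsub)) hlast_edge)
  have hin_deg := lt_two_mul_of_half_lt (hdeg.lt_inDeg
    (hfin.subset (Set.subset_union_right.trans hsub)) hD)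
  omega

lemma not_adj_of_rotate (hor : IsOriented D) (hdeg : PseudoGT D ((m : ℝ) / 2))
    (hlong : AntipathLengthLE D m) (h : IsAntipath D m x evenForward) (hm : Even m) {j : ℕ}
    (hj : Odd j) (hjm : j < m) (hD : D (x m) (x j)) : ¬ D (x 0) (x (j + 1)) := by
  have := (h.rotate hm hj hjm hD).not_adj_start_end hor hdeg hlong (by simp [evenForward])
    (by simpa [evenForward] using Nat.Even.sub_odd (by omega) hm odd_one)
  simpa [show ¬ m ≤ j by omega, show m + j + 1 - m = j + 1 by omega] using this

end IsAntipath

section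
variable {V : Type*} {D : V → V → Prop}

lemma AntipathLengthLE.converse {m : ℕ} (hlong : AntipathLengthLE D m) :
    AntipathLengthLE (flip D) m :=
  fun m' f _ h => hlong m' f _ h.converse

lemma AntipathLengthLE.pos (hor : IsOriented D) {m : ℕ} (hlong : AntipathLengthLE D m) {u v : V}
    (huv : D u v) : 0 < m :=
  hlong 1 _ _ ((IsAntipath.zero (fun _ => v) fun _ => false).cons
    (fun _ _ h => by subst h; exact hor.irrefl _ huv) huv)

end

lemma sum_range_two_mul_add_one_eq_left {M : Type*} [AddCommMonoid M] (f : ℕ → M) (n : ℕ) :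
    ∑ t ∈ range (2 * n + 1), f t =
      f 0 + ∑ r ∈ range n, (f (2 * r + 1) + f (2 * r + 2)) := by
  induction n with
  | zero => simp
  | succ n ih =>
    rw [show 2 * (n + 1) + 1 = 2 * n + 1 + 1 + 1 by ring, sum_range_succ, sum_range_succ, ih,
      sum_range_succ]
    abel

lemma sum_range_two_mul_add_one_eq_right {M : Type*} [AddCommMonoid M] (f : ℕ → M) (n : ℕ) :
    ∑ t ∈ range (2 * n + 1), f t =
      ∑ r ∈ range n, (f (2 * r) + f (2 * r + 1)) + f (2 * n) := by
  induction n with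
  | zero => simp
  | succ n ih =>
    rw [show 2 * (n + 1) + 1 = 2 * n + 1 + 1 + 1 by ring, sum_range_succ, sum_range_succ, ih,
      sum_range_succ, show 2 * (n + 1) = 2 * n + 1 + 1 by ring]
    abel

lemma card_filter_add_card_filter_le (n : ℕ) {P Q : ℕ → Prop}
    [DecidablePred P] [DecidablePred Q]
    (hP : ¬ P 0) (hQ : ¬ Q (2 * n)) (hPQ : ∀ r < n, P (2 * r + 1) → ¬ Q (2 * r))
    (hQP : ∀ r < n, Q (2 * r + 1) → ¬ P (2 * r + 2)) :
    #{t ∈ range (2 * n + 1) | P t} + #{t ∈ range (2 * n + 1) | Q t} ≤ 2 * n := by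
  rw [card_filter, card_filter, sum_range_two_mul_add_one_eq_left,
    sum_range_two_mul_add_one_eq_right, if_neg hP, if_neg hQ, zero_add, add_zero,
    ← sum_add_distrib]
  calc _ ≤ ∑ _r ∈ range n, 2 := sum_le_sum fun r hr => ?_
    _ = 2 * n := by simp [mul_comm]
  have h1 := hPQ r (mem_range.mp hr)
  have h2 := hQP r (mem_range.mp hr)
  split_ifs <;> simp_all

lemma IsAntipath.not_even_length {V : Type*} {D : V → V → Prop} (hor : IsOriented D) {m : ℕ}
    (hdeg : PseudoGT D ((m : ℝ) / 2)) (hlong : AntipathLengthLE D m) {x : ℕ → V}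
    (h : IsAntipath D m x evenForward) (hm0 : 0 < m) : ¬ Even m := by
  classical
  intro hm
  obtain ⟨n, rfl⟩ := hm.two_dvd
  have hrev := h.reverse_evenForward hm
  have hout₀ : {w | D (x 0) w} ⊆ x '' ↑(range (2 * n + 1)) := fun w hw => by
    obtain ⟨t, ht, hxt⟩ := h.exists_eq_of_adj_start hlong (by simpa [evenForward] using hw)
    exact ⟨t, mem_range.mpr (by omega), hxt⟩
  have hout₁ : {w | D (x (2 * n)) w} ⊆ x '' ↑(range (2 * n + 1)) := fun w hw => by
    obtain ⟨t, ht, hxt⟩ := hrev.exists_eq_of_adj_start hlong (by simpa [evenForward] using hw)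
    exact ⟨2 * n - t, mem_range.mpr (by omega), hxt⟩
  have hfin : (x '' ↑(range (2 * n + 1))).Finite := Set.toFinite _
  have hedge₀ : D (x 0) (x 1) := by simpa [evenForward] using h.2.1 0 hm0
  have hedge₁ : D (x (2 * n)) (x (2 * n - 1)) := by simpa [evenForward] using hrev.2.1 0 hm0
  have hdeg₀ := lt_two_mul_of_half_lt (hdeg.lt_outDeg (hfin.subset hout₀) hedge₀)
  have hdeg₁ := lt_two_mul_of_half_lt (hdeg.lt_outDeg (hfin.subset hout₁) hedge₁)
  have hQP : ∀ r < n, D (x (2 * n)) (x (2 * r + 1)) → ¬ D (x 0) (x (2 * r + 2)) :=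
    fun r hr => h.not_adj_of_rotate hor hdeg hlong hm (odd_two_mul_add_one r) (by omega)
  have hPQ : ∀ r < n, D (x 0) (x (2 * r + 1)) → ¬ D (x (2 * n)) (x (2 * r)) := by
    intro r hr hD
    have := hrev.not_adj_of_rotate hor hdeg hlong hm (odd_two_mul_add_one (n - r - 1)) (by omega)
    simp only [Nat.sub_self, Nat.sub_zero, show 2 * n - (2 * (n - r - 1) + 1) = 2 * r + 1 by omega,
      show 2 * n - (2 * (n - r - 1) + 1 + 1) = 2 * r by omega] at this
    exact this hD
  have := card_filter_add_card_filter_le n (P := fun t => D (x 0) (x t))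
    (Q := fun t => D (x (2 * n)) (x t)) (hor.irrefl _) (hor.irrefl _) hPQ hQP
  have := outDeg_le_card_filter hout₀
  have := outDeg_le_card_filter hout₁
  omega

lemma odd_of_pseudoGT {V : Type*} {D : V → V → Prop} (hor : IsOriented D) {m : ℕ}
    (hdeg : PseudoGT D ((m : ℝ) / 2)) {f : ℕ → V} {g : ℕ → Bool} (h : IsAntipath D m f g)
    (hlong : AntipathLengthLE D m) : Odd m := by
  wlog h0 : g 0 = true generalizing D g
  · exact this hor.converse hdeg.converse h.converse hlong.converse (by simpa using h0)
  obtain ⟨u, v, huv⟩ := hdeg.1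
  exact Nat.not_even_iff_odd.mp
    ((h.evenForward_of_dir h0).not_even_length hor hdeg hlong (hlong.pos hor huv))

theorem stmt_4_general {V : Type*} (D : V → V → Prop) (hor : IsOriented D)
    (k m : ℕ) (hps : PseudoGE D ((k : ℝ) / 2))
    (hpath : ∃ f g, IsAntipath D m f g)
    (hlongest : ∀ m' f g, IsAntipath D m' f g → m' ≤ m)
    (hmk : m < k) :
    Odd m := by
  obtain ⟨f, g, h⟩ := hpath
  have hmk' : (m : ℝ) / 2 < k / 2 := by
    have : (m : ℝ) < k := by exact_mod_cast hmk
    linarith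
  exact odd_of_pseudoGT hor (hps.pseudoGT hmk') h hlongest

/-- Lemma 1: if `D` is an oriented graph of minimum pseudo-semidegree at least `k/2`
and the longest antidirected path of `D` has length `m < k`, then `m` is odd. -/
theorem stmt_4 {V : Type*} [Fintype V] (D : V → V → Prop) (hor : IsOriented D)
    (k m : ℕ) (hps : PseudoGE D ((k : ℝ) / 2))
    (hpath : ∃ f g, IsAntipath D m f g)
    (hlongest : ∀ m' f g, IsAntipath D m' f g → m' ≤ m)
    (hmk : m < k) :
    Odd m :=
  stmt_4_general D hor k m hps hpath hlongest hmk
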